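/- arXiv:gr-qc/0108008 — 7 statements merged into one kernel-verified Lean document; each statement's English description precedes it below -/
import Mathlib

section
/- Under the same setup, m₁ defined by m₁(r) = r^{-3}∫₀^r x² m₂(x) dx (m₁(0)=0) is twice differentiable at 0 with m₁''(0) = m₂''(0)/5. -/
/-!
Write `a = m₂'(0)` and `c = m₂''(0)`. Taylor's theorem gives `m₂ x = a x + c x² / 2 + O(x³)` on
`[0, b]`, hence `∫₀^r x² m₂ = a r⁴ / 4 + c r⁵ / 10 + O(r⁶)` and `m₁ r = a r / 4 + c r² / 10 + O(r³)`,
so `m₁'(0) = a / 4`. For `0 < r < b` differentiating `r⁻³ ∫₀^r x² m₂` gives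
`m₁'(r) = -3 r⁻⁴ ∫₀^r x² m₂ + m₂(r) / r = a / 4 + c r / 5 + O(r²)`, so `m₁''(0) = c / 5`.
-/

open Set intervalIntegral Filter Asymptotics Topology

theorem hasDerivWithinAt_of_abs_sub_le_sq {f : ℝ → ℝ} {s : Set ℝ} {x L C : ℝ}
    (h : ∀ᶠ y in 𝓝[s] x, |f y - f x - L * (y - x)| ≤ C * (y - x) ^ 2) :
    HasDerivWithinAt f L s x := by
  rw [hasDerivWithinAt_iff_isLittleO]
  have hO : (fun y => f y - f x - (y - x) • L) =O[𝓝[s] x] fun y => (y - x) ^ 2 :=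
    IsBigO.of_bound C <| h.mono fun y hy => by
      simpa [smul_eq_mul, mul_comm, abs_of_nonneg (sq_nonneg (y - x))] using hy
  have ho : (fun y => (y - x) ^ 2) =o[𝓝[s] x] fun y => y - x :=
    ((isLittleO_pow_id one_lt_two).comp_tendsto
      (tendsto_sub_nhds_zero_iff.2 tendsto_id)).mono nhdsWithin_le_nhds
  exact hO.trans_isLittleO ho

theorem hasDerivWithinAt_Icc_zero_of_abs_sub_le_sq {f : ℝ → ℝ} {b L C : ℝ} (hb : 0 < b)
    (h : ∀ r ∈ Ioo 0 b, |f r - f 0 - L * r| ≤ C * r ^ 2) :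
    HasDerivWithinAt f L (Icc 0 b) 0 := by
  refine hasDerivWithinAt_of_abs_sub_le_sq (C := C) ?_
  filter_upwards [self_mem_nhdsWithin,
    nhdsWithin_le_nhds (eventually_lt_nhds hb)] with r hr hrb
  rcases hr.1.eq_or_lt with rfl | hr0
  · simp
  · simpa using h r ⟨hr0, hrb⟩

theorem exists_abs_sub_taylor_two_le {f : ℝ → ℝ} {b : ℝ} (hb : 0 ≤ b)
    (hf : ContDiffOn ℝ 3 f (Icc 0 b)) :
    ∃ K, 0 ≤ K ∧ ∀ x ∈ Icc 0 b, |f x - (f 0 + derivWithin f (Icc 0 b) 0 * x +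
      iteratedDerivWithin 2 f (Icc 0 b) 0 / 2 * x ^ 2)| ≤ K * x ^ 3 := by
  obtain ⟨C, hC⟩ := exists_taylor_mean_remainder_bound (n := 2) hb (by exact_mod_cast hf)
  refine ⟨|C|, abs_nonneg C, fun x hx => ?_⟩
  have hTaylor := hC x hx
  simp only [taylor_within_apply, Finset.sum_range_succ, Finset.sum_range_zero,
    iteratedDerivWithin_zero, iteratedDerivWithin_one, sub_zero, smul_eq_mul,
    Real.norm_eq_abs] at hTaylor
  calc _ = _ := by norm_num [Nat.factorial]; ring_nf
    _ ≤ C * x ^ 3 := hTaylor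
    _ ≤ |C| * x ^ 3 := by gcongr; exacts [pow_nonneg hx.1 3, le_abs_self C]

theorem integral_sq_mul_linear_add_sq (a c r : ℝ) :
    ∫ x in (0:ℝ)..r, x ^ 2 * (a * x + c / 2 * x ^ 2) = a / 4 * r ^ 4 + c / 10 * r ^ 5 := by
  have h : (fun x : ℝ => x ^ 2 * (a * x + c / 2 * x ^ 2)) =
      fun x => a * x ^ 3 + c / 2 * x ^ 4 := by ext x; ring
  rw [h, intervalIntegral.integral_add (Continuous.intervalIntegrable (by fun_prop) _ _)
    (Continuous.intervalIntegrable (by fun_prop) _ _), intervalIntegral.integral_const_mul,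
    intervalIntegral.integral_const_mul, integral_pow, integral_pow]
  ring

theorem abs_integral_sq_mul_sub_le {g : ℝ → ℝ} {a c K r : ℝ} (hr : 0 ≤ r) (hK : 0 ≤ K)
    (hg : ContinuousOn g (Icc 0 r))
    (h : ∀ x ∈ Icc 0 r, |g x - (a * x + c / 2 * x ^ 2)| ≤ K * x ^ 3) :
    |(∫ x in (0:ℝ)..r, x ^ 2 * g x) - (a / 4 * r ^ 4 + c / 10 * r ^ 5)| ≤ K * r ^ 6 := by
  have hint : IntervalIntegrable (fun x => x ^ 2 * g x) MeasureTheory.volume 0 r :=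
    ((continuousOn_pow 2).mul hg).intervalIntegrable_of_Icc hr
  rw [← integral_sq_mul_linear_add_sq,
    ← integral_sub hint (Continuous.intervalIntegrable (by fun_prop) _ _)]
  have hbound : ∀ x ∈ uIoc 0 r,
      ‖x ^ 2 * g x - x ^ 2 * (a * x + c / 2 * x ^ 2)‖ ≤ K * r ^ 5 := by
    intro x hx
    rw [uIoc_of_le hr] at hx
    have hx0 := hx.1.le
    calc ‖x ^ 2 * g x - x ^ 2 * (a * x + c / 2 * x ^ 2)‖
        = x ^ 2 * |g x - (a * x + c / 2 * x ^ 2)| := by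
          rw [← mul_sub, Real.norm_eq_abs, abs_mul, abs_of_nonneg (sq_nonneg x)]
      _ ≤ x ^ 2 * (K * x ^ 3) := by gcongr; exact h x (Ioc_subset_Icc_self hx)
      _ = K * x ^ 5 := by ring
      _ ≤ K * r ^ 5 := by gcongr; exact hx.2
  calc _ ≤ K * r ^ 5 * |r - 0| := norm_integral_le_of_norm_le_const hbound
    _ = K * r ^ 6 := by rw [sub_zero, abs_of_nonneg hr]; ring

/-- A third of the mean of `y ↦ g ‖y‖` over the ball of radius `r` in `ℝ³`. At `r = 0` the
convention `0⁻¹ = 0` makes it vanish. -/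
noncomputable def ballMean (g : ℝ → ℝ) (r : ℝ) : ℝ :=
  r⁻¹ ^ 3 * ∫ x in (0:ℝ)..r, x ^ 2 * g x

theorem hasDerivAt_ballMean {g : ℝ → ℝ} {b r : ℝ} (hg : ContinuousOn g (Icc 0 b))
    (hr : r ∈ Ioo 0 b) :
    HasDerivAt (ballMean g)
      (-3 * (∫ x in (0:ℝ)..r, x ^ 2 * g x) / r ^ 4 + g r / r) r := by
  have hφ : ContinuousOn (fun x => x ^ 2 * g x) (Icc 0 b) := (continuousOn_pow 2).mul hg
  have hIcc : Icc 0 b ∈ 𝓝 r := Icc_mem_nhds hr.1 hr.2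
  have hintegral : HasDerivAt (fun u => ∫ x in (0:ℝ)..u, x ^ 2 * g x) (r ^ 2 * g r) r :=
    integral_hasDerivAt_right
      ((hφ.mono (Icc_subset_Icc_right hr.2.le)).intervalIntegrable_of_Icc hr.1.le)
      ((hφ.mono Ioo_subset_Icc_self).stronglyMeasurableAtFilter isOpen_Ioo r hr)
      (hφ.continuousAt hIcc)
  have hr0 : r ≠ 0 := hr.1.ne'
  refine (((hasDerivAt_inv hr0).fun_pow 3).fun_mul hintegral).congr_deriv ?_
  simp only [inv_pow]
  field_simp
  ring

theorem hasDerivWithinAt_ballMean_zero {g : ℝ → ℝ} {a b c K : ℝ} (hb : 0 < b) (hK : 0 ≤ K)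
    (hg : ContinuousOn g (Icc 0 b))
    (hT : ∀ x ∈ Icc 0 b, |g x - (a * x + c / 2 * x ^ 2)| ≤ K * x ^ 3) :
    HasDerivWithinAt (ballMean g) (a / 4) (Icc 0 b) 0 := by
  refine hasDerivWithinAt_Icc_zero_of_abs_sub_le_sq (C := |c| / 10 + K * b) hb fun r hr => ?_
  have hr0 : r ≠ 0 := hr.1.ne'
  have hIcc : Icc 0 r ⊆ Icc 0 b := Icc_subset_Icc_right hr.2.le
  have hE := abs_integral_sq_mul_sub_le hr.1.le hK (hg.mono hIcc) fun x hx => hT x (hIcc hx)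
  set E := (∫ x in (0:ℝ)..r, x ^ 2 * g x) - (a / 4 * r ^ 4 + c / 10 * r ^ 5)
  have hsplit : ballMean g r - ballMean g 0 - a / 4 * r = c / 10 * r ^ 2 + E / r ^ 3 := by
    simp only [ballMean, E, inv_pow]
    field_simp
    ring
  calc |ballMean g r - ballMean g 0 - a / 4 * r|
      ≤ |c| / 10 * r ^ 2 + K * r ^ 6 / r ^ 3 := by
        rw [hsplit]
        refine (abs_add_le _ _).trans (add_le_add (le_of_eq ?_) ?_)
        · rw [abs_mul, abs_div, abs_of_nonneg (sq_nonneg r)]; norm_num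
        · rw [abs_div, abs_of_pos (pow_pos hr.1 3)]; gcongr; exact pow_nonneg hr.1.le 3
    _ = |c| / 10 * r ^ 2 + K * r * r ^ 2 := by field_simp
    _ ≤ (|c| / 10 + K * b) * r ^ 2 := by
        rw [add_mul]; gcongr; exact hr.2.le

theorem hasDerivWithinAt_derivWithin_ballMean_zero {g : ℝ → ℝ} {a b c K : ℝ} (hb : 0 < b)
    (hK : 0 ≤ K) (hg : ContinuousOn g (Icc 0 b))
    (hT : ∀ x ∈ Icc 0 b, |g x - (a * x + c / 2 * x ^ 2)| ≤ K * x ^ 3) :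
    HasDerivWithinAt (derivWithin (ballMean g) (Icc 0 b)) (c / 5) (Icc 0 b) 0 := by
  have hunique := uniqueDiffOn_Icc hb
  have hderiv0 : derivWithin (ballMean g) (Icc 0 b) 0 = a / 4 :=
    (hasDerivWithinAt_ballMean_zero hb hK hg hT).derivWithin
      (hunique 0 (left_mem_Icc.2 hb.le))
  refine hasDerivWithinAt_Icc_zero_of_abs_sub_le_sq (C := 4 * K) hb fun r hr => ?_
  have hr0 : r ≠ 0 := hr.1.ne'
  have hIcc : Icc 0 r ⊆ Icc 0 b := Icc_subset_Icc_right hr.2.le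
  have hE := abs_integral_sq_mul_sub_le hr.1.le hK (hg.mono hIcc) fun x hx => hT x (hIcc hx)
  have hρ := hT r (Ioo_subset_Icc_self hr)
  have hderiv : derivWithin (ballMean g) (Icc 0 b) r = _ :=
    (hasDerivAt_ballMean hg hr).hasDerivWithinAt.derivWithin (hunique r (Ioo_subset_Icc_self hr))
  set E := (∫ x in (0:ℝ)..r, x ^ 2 * g x) - (a / 4 * r ^ 4 + c / 10 * r ^ 5)
  set ρ := g r - (a * r + c / 2 * r ^ 2)
  have hsplit : derivWithin (ballMean g) (Icc 0 b) r - derivWithin (ballMean g) (Icc 0 b) 0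
      - c / 5 * r = -3 * E / r ^ 4 + ρ / r := by
    rw [hderiv, hderiv0]
    simp only [E, ρ]
    field_simp
    ring
  calc |derivWithin (ballMean g) (Icc 0 b) r - derivWithin (ballMean g) (Icc 0 b) 0 - c / 5 * r|
      ≤ 3 * (K * r ^ 6) / r ^ 4 + K * r ^ 3 / r := by
        rw [hsplit]
        refine (abs_add_le _ _).trans (add_le_add ?_ ?_)
        · rw [abs_div, abs_mul, abs_of_pos (pow_pos hr.1 4)]; norm_num; gcongr
        · rw [abs_div, abs_of_pos hr.1]; gcongr; exact hr.1.le
    _ = 4 * K * r ^ 2 := by field_simp; ring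

/-- Under the same setup, `m₁` is twice differentiable at `0`
with `m₁''(0) = m₂''(0)/5`. -/
theorem stmt1 (b : ℝ) (hb : 0 < b) (m₁ m₂ : ℝ → ℝ)
    (hm₂ : ContDiffOn ℝ 3 m₂ (Icc 0 b)) (hm₂0 : m₂ 0 = 0)
    (hm₁ : ∀ r ∈ Ioc 0 b, m₁ r = r⁻¹ ^ 3 * ∫ x in (0:ℝ)..r, x ^ 2 * m₂ x)
    (hm₁0 : m₁ 0 = 0) :
    DifferentiableWithinAt ℝ m₁ (Icc 0 b) 0 ∧
    DifferentiableWithinAt ℝ (derivWithin m₁ (Icc 0 b)) (Icc 0 b) 0 ∧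
    iteratedDerivWithin 2 m₁ (Icc 0 b) 0 = iteratedDerivWithin 2 m₂ (Icc 0 b) 0 / 5 := by
  have h0 : (0:ℝ) ∈ Icc 0 b := left_mem_Icc.2 hb.le
  obtain ⟨K, hK, hT⟩ := exists_abs_sub_taylor_two_le hb.le hm₂
  simp only [hm₂0, zero_add] at hT
  have heq : EqOn m₁ (ballMean m₂) (Icc 0 b) := by
    rintro r ⟨hr0, hrb⟩
    rcases hr0.eq_or_lt with rfl | hr0
    · simp [ballMean, hm₁0]
    · exact hm₁ r ⟨hr0, hrb⟩
  have hderiv_eq : EqOn (derivWithin m₁ (Icc 0 b)) (derivWithin (ballMean m₂) (Icc 0 b))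
      (Icc 0 b) := fun r hr => derivWithin_congr heq (heq hr)
  have h1 := (hasDerivWithinAt_ballMean_zero hb hK hm₂.continuousOn hT).congr heq (heq h0)
  have h2 := (hasDerivWithinAt_derivWithin_ballMean_zero hb hK hm₂.continuousOn hT).congr
    hderiv_eq (hderiv_eq h0)
  refine ⟨h1.differentiableWithinAt, h2.differentiableWithinAt, ?_⟩
  rw [iteratedDerivWithin_succ', iteratedDerivWithin_one,
    h2.derivWithin (uniqueDiffOn_Icc hb 0 h0)]
end

section
/- Under the same setup, m₁ defined by m₁(r) = r^{-3}∫₀^r x² m₂(x) dx (m₁(0)=0) is three times differentiable at 0 with m₁'''(0) = m₂'''(0)/6, and m₁ ∈ C³([0,b]). -/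
/-!
Substituting `x = r t` gives `m₁ r = ∫₀¹ t² m₂ (r t) dt` for every `r ∈ [0, b]`, including
`r = 0` because `m₂ 0 = 0`. Writing `∫₀¹ tᵏ f (r t) dt` as its value at `0` plus the integral
over `[0, r]` of `∫₀¹ tᵏ⁺¹ f' (u t) dt` (Fubini and the fundamental theorem of calculus) shows
that the `k`-th derivative of `m₁` on `[0, b]` is `∫₀¹ t^(k+2) m₂⁽ᵏ⁾ (r t) dt` for `k ≤ 3`. These
are continuous in `r`, and at `r = 0` the third one is `m₂'''(0) ∫₀¹ t⁵ dt = m₂'''(0) / 6`.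
-/

open Set intervalIntegral

section IteratedDerivWithin

variable {𝕜 F : Type*} [NontriviallyNormedField 𝕜] [NormedAddCommGroup F] [NormedSpace 𝕜 F]
  {s : Set 𝕜} {f : 𝕜 → F} {G : ℕ → 𝕜 → F} {n : ℕ}

theorem iteratedDerivWithin_eqOn_of_hasDerivWithinAt (hs : UniqueDiffOn 𝕜 s)
    (hf : EqOn f (G 0) s) (hG : ∀ k < n, ∀ x ∈ s, HasDerivWithinAt (G k) (G (k + 1) x) s x) :
    ∀ k ≤ n, EqOn (iteratedDerivWithin k f s) (G k) s := by
  intro k hk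
  induction k with
  | zero => simpa using hf
  | succ k ih =>
    intro x hx
    rw [iteratedDerivWithin_succ, derivWithin_congr (ih (by omega)) (ih (by omega) hx)]
    exact (hG k (by omega) x hx).derivWithin (hs x hx)

theorem contDiffOn_of_hasDerivWithinAt (hs : UniqueDiffOn 𝕜 s)
    (hf : EqOn f (G 0) s) (hcont : ∀ k ≤ n, ContinuousOn (G k) s)
    (hG : ∀ k < n, ∀ x ∈ s, HasDerivWithinAt (G k) (G (k + 1) x) s x) :
    ContDiffOn 𝕜 n f s := by
  have hiter := iteratedDerivWithin_eqOn_of_hasDerivWithinAt hs hf hG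
  have := (contDiffOn_iff_continuousOn_differentiableOn_deriv (n := n) hs).2
    ⟨fun k hk => (hcont k (by exact_mod_cast hk)).congr (hiter k (by exact_mod_cast hk)),
     fun k hk x hx => ((hG k (by exact_mod_cast hk) x hx).congr (hiter k (by exact_mod_cast hk.le))
        (hiter k (by exact_mod_cast hk.le) hx)).differentiableWithinAt⟩
  exact_mod_cast this

end IteratedDerivWithin

section IccExtend

variable {f : ℝ → ℝ} {a b : ℝ} (hab : a < b) {n : WithTop ℕ∞} {k : ℕ}
  (hf : ContDiffOn ℝ n f (Icc a b))
include hf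

theorem ContDiffOn.continuous_IccExtend_iteratedDerivWithin (hk : k ≤ n) :
    Continuous (IccExtend hab.le ((Icc a b).domRestrict (iteratedDerivWithin k f (Icc a b)))) :=
  continuous_IccExtend_iff.2
    (hf.continuousOn_iteratedDerivWithin hk (uniqueDiffOn_Icc hab)).domRestrict

theorem ContDiffOn.hasDerivAt_IccExtend_iteratedDerivWithin (hk : k < n) {x : ℝ}
    (hx : x ∈ Ioo a b) :
    HasDerivAt (IccExtend hab.le ((Icc a b).domRestrict (iteratedDerivWithin k f (Icc a b))))
      (iteratedDerivWithin (k + 1) f (Icc a b) x) x := by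
  have hnhds : Icc a b ∈ nhds x := Icc_mem_nhds hx.1 hx.2
  have hwithin := (hf.differentiableOn_iteratedDerivWithin hk (uniqueDiffOn_Icc hab) x
    (Ioo_subset_Icc_self hx)).hasDerivWithinAt
  rw [← iteratedDerivWithin_succ] at hwithin
  refine (hwithin.hasDerivAt hnhds).congr_of_eventuallyEq ?_
  filter_upwards [hnhds] with y hy using IccExtend_of_mem hab.le _ hy

end IccExtend

noncomputable def radialMoment (k : ℕ) (f : ℝ → ℝ) (r : ℝ) : ℝ :=
  ∫ t in (0:ℝ)..1, t ^ k * f (r * t)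

theorem radialMoment_zero_right (k : ℕ) (f : ℝ → ℝ) : radialMoment k f 0 = f 0 / (k + 1) := by
  simp [radialMoment, integral_mul_const, integral_pow, div_eq_inv_mul]

theorem radialMoment_eq_inv_pow_mul_integral (k : ℕ) (f : ℝ → ℝ) {r : ℝ} (hr : r ≠ 0) :
    radialMoment k f r = r⁻¹ ^ (k + 1) * ∫ x in (0:ℝ)..r, x ^ k * f x := by
  have hsub := integral_comp_mul_left (a := 0) (b := 1) (fun x => x ^ k * f x) hr
  simp only [mul_zero, mul_one, smul_eq_mul] at hsub
  calc radialMoment k f r = r⁻¹ ^ k * ∫ t in (0:ℝ)..1, (r * t) ^ k * f (r * t) := by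
        rw [← integral_const_mul]
        refine integral_congr fun t _ => ?_
        simp only [← mul_assoc, ← mul_pow, inv_mul_cancel₀ hr, one_mul]
    _ = _ := by rw [hsub]; ring

theorem Continuous.radialMoment {f : ℝ → ℝ} (hf : Continuous f) (k : ℕ) :
    Continuous (radialMoment k f) :=
  continuous_parametric_intervalIntegral_of_continuous' (by fun_prop) 0 1

section Derivative

variable {f f' : ℝ → ℝ} {b : ℝ} (hf : Continuous f) (hf' : Continuous f')
  (hderiv : ∀ x ∈ Ioo 0 b, HasDerivAt f (f' x) x)
include hf hf' hderiv

theorem integral_pow_mul_comp_mul_eq (k : ℕ) {r t : ℝ} (hr : r ∈ Icc 0 b) (ht : t ∈ Icc (0:ℝ) 1) :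
    ∫ u in (0:ℝ)..r, t ^ (k + 1) * f' (u * t) = t ^ k * (f (r * t) - f 0) := by
  rcases ht.1.eq_or_lt with rfl | ht₀
  · simp
  have hmaps : ∀ u ∈ Ioo 0 r, u * t ∈ Ioo 0 b := fun u hu =>
    ⟨mul_pos hu.1 ht₀, (mul_le_of_le_one_right hu.1.le ht.2).trans_lt (hu.2.trans_le hr.2)⟩
  have hFTC := integral_eq_sub_of_hasDerivAt_of_le hr.1
    (f := fun u => t ^ k * f (u * t)) (f' := fun u => t ^ (k + 1) * f' (u * t)) (by fun_prop)
    (fun u hu => (((hderiv _ (hmaps u hu)).comp u ((hasDerivAt_id u).mul_const t)).const_mul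
      (t ^ k)).congr_deriv (by ring))
    (Continuous.intervalIntegrable (by fun_prop) _ _)
  simpa [mul_sub] using hFTC

theorem radialMoment_eq_add_integral (k : ℕ) {r : ℝ} (hr : r ∈ Icc 0 b) :
    radialMoment k f r = f 0 / (k + 1) + ∫ u in (0:ℝ)..r, radialMoment (k + 1) f' u := by
  have hswap : ∫ u in (0:ℝ)..r, radialMoment (k + 1) f' u
      = ∫ t in (0:ℝ)..1, ∫ u in (0:ℝ)..r, t ^ (k + 1) * f' (u * t) :=
    MeasureTheory.intervalIntegral_intervalIntegral_swap <|
      (ContinuousOn.integrableOn_compact (isCompact_uIcc.prod isCompact_uIcc)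
        (Continuous.continuousOn (by fun_prop))).mono_set
        (prod_mono uIoc_subset_uIcc uIoc_subset_uIcc)
  have hinner : ∫ t in (0:ℝ)..1, ∫ u in (0:ℝ)..r, t ^ (k + 1) * f' (u * t)
      = radialMoment k f r - radialMoment k f 0 := by
    rw [integral_congr fun t ht => integral_pow_mul_comp_mul_eq hf hf' hderiv k hr
      (by rwa [uIcc_of_le zero_le_one] at ht)]
    simp only [mul_sub, zero_mul, radialMoment]
    exact integral_sub (Continuous.intervalIntegrable (by fun_prop) _ _)
      (Continuous.intervalIntegrable (by fun_prop) _ _)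
  rw [hswap, hinner, radialMoment_zero_right]
  ring

theorem hasDerivWithinAt_radialMoment (k : ℕ) {r : ℝ} (hr : r ∈ Icc 0 b) :
    HasDerivWithinAt (radialMoment k f) (radialMoment (k + 1) f' r) (Icc 0 b) r := by
  have hcont := hf'.radialMoment (k + 1)
  refine (((integral_hasDerivAt_right (hcont.intervalIntegrable 0 r)
    hcont.aestronglyMeasurable.stronglyMeasurableAtFilter hcont.continuousAt).const_add
      (f 0 / (k + 1))).hasDerivWithinAt).congr (fun x hx => ?_) ?_
  · exact radialMoment_eq_add_integral hf hf' hderiv k hx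
  · exact radialMoment_eq_add_integral hf hf' hderiv k hr

end Derivative

/-- Under the same setup, `m₁` is three times differentiable at `0`
with `m₁'''(0) = m₂'''(0)/6`, and `m₁ ∈ C³[0,b]`. -/
theorem stmt2 (b : ℝ) (hb : 0 < b) (m₁ m₂ : ℝ → ℝ)
    (hm₂ : ContDiffOn ℝ 3 m₂ (Icc 0 b)) (hm₂0 : m₂ 0 = 0)
    (hm₁ : ∀ r ∈ Ioc 0 b, m₁ r = r⁻¹ ^ 3 * ∫ x in (0:ℝ)..r, x ^ 2 * m₂ x)
    (hm₁0 : m₁ 0 = 0) :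
    ContDiffOn ℝ 3 m₁ (Icc 0 b) ∧
    iteratedDerivWithin 3 m₁ (Icc 0 b) 0 = iteratedDerivWithin 3 m₂ (Icc 0 b) 0 / 6 := by
  -- Extended constantly outside `[0, b]`, the derivatives of `m₂` become continuous on `ℝ`,
  -- which is what the lemmas on `radialMoment` ask for.
  set D : ℕ → ℝ → ℝ := fun k =>
    IccExtend hb.le ((Icc 0 b).domRestrict (iteratedDerivWithin k m₂ (Icc 0 b)))
  have hD_eq : ∀ k, ∀ x ∈ Icc 0 b, D k x = iteratedDerivWithin k m₂ (Icc 0 b) x :=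
    fun k x hx => IccExtend_of_mem hb.le _ hx
  have hD_cont : ∀ k ≤ 3, Continuous (D k) := fun k hk =>
    hm₂.continuous_IccExtend_iteratedDerivWithin hb (by exact_mod_cast hk)
  have hD_deriv : ∀ k < 3, ∀ x ∈ Ioo 0 b, HasDerivAt (D k) (D (k + 1) x) x := fun k hk x hx => by
    rw [hD_eq _ _ (Ioo_subset_Icc_self hx)]
    exact hm₂.hasDerivAt_IccExtend_iteratedDerivWithin hb (by exact_mod_cast hk) hx
  have hm₁_eq : EqOn m₁ (radialMoment 2 (D 0)) (Icc 0 b) := by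
    rintro r ⟨hr₀, hrb⟩
    rcases hr₀.eq_or_lt with rfl | hr₀
    · simp [hm₁0, radialMoment_zero_right, hD_eq 0 0 ⟨le_rfl, hb.le⟩, hm₂0]
    rw [hm₁ r ⟨hr₀, hrb⟩, radialMoment_eq_inv_pow_mul_integral _ _ hr₀.ne']
    congr 1
    refine integral_congr fun x hx => ?_
    rw [uIcc_of_le hr₀.le] at hx
    simp [hD_eq 0 x ⟨hx.1, hx.2.trans hrb⟩]
  have hG_deriv : ∀ k < 3, ∀ r ∈ Icc 0 b, HasDerivWithinAt (radialMoment (k + 2) (D k))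
      (radialMoment (k + 1 + 2) (D (k + 1)) r) (Icc 0 b) r := fun k hk r hr =>
    hasDerivWithinAt_radialMoment (hD_cont k hk.le) (hD_cont (k + 1) hk) (hD_deriv k hk) _ hr
  have hG_cont : ∀ k ≤ 3, ContinuousOn (radialMoment (k + 2) (D k)) (Icc 0 b) := fun k hk =>
    ((hD_cont k hk).radialMoment _).continuousOn
  have hus := uniqueDiffOn_Icc hb
  refine ⟨by exact_mod_cast contDiffOn_of_hasDerivWithinAt (n := 3) hus hm₁_eq hG_cont hG_deriv, ?_⟩
  rw [iteratedDerivWithin_eqOn_of_hasDerivWithinAt hus hm₁_eq hG_deriv 3 le_rfl ⟨le_rfl, hb.le⟩,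
    radialMoment_zero_right, hD_eq 3 0 ⟨le_rfl, hb.le⟩]
  norm_num
end

section
/- For β>0 and the function f_λ(l) = l⁴ − l³ + λ(1 − l/3)³ with λ = 81/(4β), f_λ has a double positive root (i.e. a value l>0 with f_λ(l)=f_λ'(l)=0) exactly for λ = 27(26−15√3)/2 with root l = 3(2−√3), and λ = 27(26+15√3)/2 with root l = 3(2+√3). -/
/-!
The combination `f_λ + (1 - l/3) f_λ'` does not involve `λ`: it equals `-l²(l² - 12l + 9)/3`.
So a double root `l > 0` solves `l² - 12l + 9 = 0`, i.e. `l = 3(2 ± √3)`, and then `f_λ'(l) = 0`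
is linear in `λ` with nonzero coefficient `(1 - l/3)² = 4 ± 2√3`, which pins down `λ`.
-/

open Real

noncomputable def fLam (lam x : ℝ) : ℝ := x ^ 4 - x ^ 3 + lam * (1 - x / 3) ^ 3

theorem hasDerivAt_fLam (lam l : ℝ) :
    HasDerivAt (fLam lam) (4 * l ^ 3 - 3 * l ^ 2 - lam * (1 - l / 3) ^ 2) l := by
  refine (((hasDerivAt_pow 4 l).sub (hasDerivAt_pow 3 l)).add
    ((((hasDerivAt_id l).div_const 3).const_sub 1).pow 3 |>.const_mul lam)).congr_deriv ?_
  norm_num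
  ring

theorem fLam_add_mul_deriv (lam l : ℝ) :
    fLam lam l + (1 - l / 3) * (4 * l ^ 3 - 3 * l ^ 2 - lam * (1 - l / 3) ^ 2)
      = -(l ^ 2 * (l ^ 2 - 12 * l + 9)) / 3 := by
  unfold fLam
  ring

theorem fLam_eq_zero_and_deriv_eq_zero_iff {lam l : ℝ} (hl : l ≠ 0) :
    fLam lam l = 0 ∧ deriv (fLam lam) l = 0 ↔
      l ^ 2 - 12 * l + 9 = 0 ∧ lam * (1 - l / 3) ^ 2 = 4 * l ^ 3 - 3 * l ^ 2 := by
  have hres := fLam_add_mul_deriv lam l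
  rw [(hasDerivAt_fLam lam l).deriv]
  constructor
  · rintro ⟨hf, hd⟩
    rw [hf, hd, mul_zero, add_zero, eq_comm, div_eq_zero_iff, neg_eq_zero] at hres
    exact ⟨by simpa [hl] using hres, by linear_combination -hd⟩
  · rintro ⟨hq, hd⟩
    have hd' : 4 * l ^ 3 - 3 * l ^ 2 - lam * (1 - l / 3) ^ 2 = 0 := by linear_combination -hd
    rw [hd', hq] at hres
    exact ⟨by simpa using hres, hd'⟩

theorem sq_sub_twelve_mul_add_nine_eq_zero_iff {l : ℝ} :
    l ^ 2 - 12 * l + 9 = 0 ↔ l = 3 * (2 - √3) ∨ l = 3 * (2 + √3) := by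
  have hs : √3 ^ 2 = 3 := sq_sqrt (by norm_num)
  have hfac : l ^ 2 - 12 * l + 9 = (l - 3 * (2 - √3)) * (l - 3 * (2 + √3)) := by
    linear_combination 9 * hs
  rw [hfac, mul_eq_zero, sub_eq_zero, sub_eq_zero]

/-- `s` stands for either square root of `3`, covering both double roots at once. -/
theorem mul_sq_eq_iff_of_sq_eq_three {lam s : ℝ} (hs : s ^ 2 = 3) :
    lam * (1 - 3 * (2 + s) / 3) ^ 2 = 4 * (3 * (2 + s)) ^ 3 - 3 * (3 * (2 + s)) ^ 2 ↔
      lam = 27 * (26 + 15 * s) / 2 := by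
  have hsq : (1 - 3 * (2 + s) / 3) ^ 2 = 4 + 2 * s := by linear_combination hs
  have hne : 4 + 2 * s ≠ 0 := by
    intro h
    nlinarith
  have hrhs : 4 * (3 * (2 + s)) ^ 3 - 3 * (3 * (2 + s)) ^ 2
      = 27 * (26 + 15 * s) / 2 * (4 + 2 * s) := by
    linear_combination 108 * (s + 2) * hs
  rw [hsq, hrhs, mul_left_inj' hne]

/-- For `λ > 0` and `f_λ l = l⁴ − l³ + λ(1 − l/3)³`, `f_λ` has a
double positive root exactly for `λ = 27(26−15√3)/2` with root `l = 3(2−√3)`,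
and `λ = 27(26+15√3)/2` with root `l = 3(2+√3)`. -/
theorem stmt9 :
    ∀ lam > (0:ℝ), ∀ l > (0:ℝ),
      ((fun x : ℝ => x ^ 4 - x ^ 3 + lam * (1 - x / 3) ^ 3) l = 0 ∧
        deriv (fun x : ℝ => x ^ 4 - x ^ 3 + lam * (1 - x / 3) ^ 3) l = 0) ↔
      ((lam = 27 * (26 - 15 * Real.sqrt 3) / 2 ∧ l = 3 * (2 - Real.sqrt 3)) ∨
        (lam = 27 * (26 + 15 * Real.sqrt 3) / 2 ∧ l = 3 * (2 + Real.sqrt 3))) := by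
  intro lam _ l hl
  change fLam lam l = 0 ∧ deriv (fLam lam) l = 0 ↔ _
  rw [fLam_eq_zero_and_deriv_eq_zero_iff hl.ne', sq_sub_twelve_mul_add_nine_eq_zero_iff,
    or_and_right]
  refine or_congr ?_ ?_ <;> rw [and_comm] <;> refine and_congr_left fun hroot => ?_ <;> subst hroot
  · simpa [sub_eq_add_neg] using mul_sq_eq_iff_of_sq_eq_three (lam := lam) (s := -√3) (by simp)
  · exact mul_sq_eq_iff_of_sq_eq_three (by simp)
end

section
/- Let λ₁ = 27(26−15√3)/2. For every λ ∈ (0, λ₁), the polynomial f_λ(l) = l⁴ − l³ + λ(1−l/3)³ has at least two distinct positive real roots. -/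
open Real Set

/-- For `λ₁ = 27(26−15√3)/2` and every `λ ∈ (0, λ₁)`, the
polynomial `f_λ l = l⁴ − l³ + λ(1−l/3)³` has at least two distinct positive
real roots. -/
theorem stmt10 :
    ∀ lam ∈ Ioo (0:ℝ) (27 * (26 - 15 * Real.sqrt 3) / 2),
      ∃ l₁ l₂ : ℝ, 0 < l₁ ∧ 0 < l₂ ∧ l₁ ≠ l₂ ∧
        l₁ ^ 4 - l₁ ^ 3 + lam * (1 - l₁ / 3) ^ 3 = 0 ∧
        l₂ ^ 4 - l₂ ^ 3 + lam * (1 - l₂ / 3) ^ 3 = 0 := by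
  rintro lam ⟨hlam0, hlam1⟩
  set s := Real.sqrt 3 with hs_def
  have hs2 : s ^ 2 = 3 := Real.sq_sqrt (by norm_num)
  have hs_lb : (1.7 : ℝ) < s := by nlinarith [Real.sqrt_nonneg 3]
  have hs_ub : s < 1.74 := by nlinarith [Real.sqrt_nonneg 3]
  set c : ℝ := 6 - 3 * s with hc_def
  have hc0 : 0 < c := by simp only [hc_def]; nlinarith
  have hc1 : c < 1 := by simp only [hc_def]; nlinarith
  set F : ℝ → ℝ := fun l => l ^ 4 - l ^ 3 + lam * (1 - l / 3) ^ 3 with hF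
  have hcont : Continuous F := by fun_prop
  have hF0 : 0 < F 0 := by simp only [hF]; norm_num; exact hlam0
  have hF1 : 0 < F 1 := by simp only [hF]; norm_num; nlinarith
  have hFc : F c < 0 := by
    have key : (6 - 3*s) ^ 4 - (6 - 3*s) ^ 3 + lam * (1 - (6 - 3*s) / 3) ^ 3
        = (lam - 27 * (26 - 15 * s) / 2) * (6 * s - 10) := by
      linear_combination (81*s^2 - 621*s + 810 + lam*(s-3)) * hs2
    simp only [hF, hc_def]
    rw [key]
    have h6s : 0 < 6 * s - 10 := by nlinarith
    nlinarith [mul_pos (sub_pos.mpr hlam1) h6s]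
  -- first root in (0, c)
  have h1 : (0:ℝ) ∈ Icc (F c) (F 0) := ⟨le_of_lt hFc, le_of_lt hF0⟩
  obtain ⟨l₁, hl₁mem, hl₁⟩ := intermediate_value_Icc' (le_of_lt hc0) hcont.continuousOn h1
  -- second root in (c, 1)
  have h2 : (0:ℝ) ∈ Icc (F c) (F 1) := ⟨le_of_lt hFc, le_of_lt hF1⟩
  obtain ⟨l₂, hl₂mem, hl₂⟩ := intermediate_value_Icc (le_of_lt hc1) hcont.continuousOn h2
  have hl₁0 : 0 < l₁ := by
    rcases lt_or_eq_of_le hl₁mem.1 with h | h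
    · exact h
    · exfalso; rw [← h] at hl₁; rw [hl₁] at hF0; exact lt_irrefl _ hF0
  have hl₁c : l₁ < c := by
    rcases lt_or_eq_of_le hl₁mem.2 with h | h
    · exact h
    · exfalso; rw [h] at hl₁; rw [hl₁] at hFc; exact lt_irrefl _ hFc
  have hl₂c : c < l₂ := by
    rcases lt_or_eq_of_le hl₂mem.1 with h | h
    · exact h
    · exfalso; rw [← h] at hl₂; rw [hl₂] at hFc; exact lt_irrefl _ hFc
  exact ⟨l₁, l₂, hl₁0, lt_trans hc0 hl₂c, ne_of_lt (lt_trans hl₁c hl₂c), hl₁, hl₂⟩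
end

section
/- Let λ₂ = 27(26+15√3)/2. For every λ > λ₂, the polynomial f_λ(l) = l⁴ − l³ + λ(1−l/3)³ has at least two distinct positive real roots. -/
/-!
At `l = 3` the cube vanishes and `f_λ 3 = 54 > 0`; at `L = 6 + 3√3` one computes
`f_λ L = (λ₂ - λ)(10 + 6√3) < 0`; and at `l = λ` the quartic term dominates, so `f_λ λ > 0`.
The intermediate value theorem gives a root on each side of `L`.
-/

open Real Set

section TwoPreimages

variable {α δ : Type*} [ConditionallyCompleteLinearOrder α] [TopologicalSpace α] [OrderTopology α]
  [DenselyOrdered α] [LinearOrder δ] [TopologicalSpace δ] [OrderClosedTopology δ]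

theorem exists_lt_lt_of_gt_of_lt_of_gt {f : α → δ} {a b c : α} {y : δ}
    (hab : a ≤ b) (hbc : b ≤ c) (hf : ContinuousOn f (Icc a c))
    (ha : y < f a) (hb : f b < y) (hc : y < f c) :
    ∃ x₁ x₂, x₁ ∈ Ioo a b ∧ x₂ ∈ Ioo b c ∧ f x₁ = y ∧ f x₂ = y := by
  obtain ⟨x₁, hx₁, hfx₁⟩ :=
    intermediate_value_Ioo' hab (hf.mono (Icc_subset_Icc_right hbc)) ⟨hb, ha⟩
  obtain ⟨x₂, hx₂, hfx₂⟩ :=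
    intermediate_value_Ioo hbc (hf.mono (Icc_subset_Icc_left hab)) ⟨hb, hc⟩
  exact ⟨x₁, x₂, hx₁, hx₂, hfx₁, hfx₂⟩

end TwoPreimages

noncomputable def quarticCubic (lam l : ℝ) : ℝ := l ^ 4 - l ^ 3 + lam * (1 - l / 3) ^ 3

theorem continuous_quarticCubic (lam : ℝ) : Continuous (quarticCubic lam) := by
  unfold quarticCubic
  fun_prop

theorem quarticCubic_three (lam : ℝ) : quarticCubic lam 3 = 54 := by
  norm_num [quarticCubic]

theorem quarticCubic_six_add_three_sqrt_three (lam : ℝ) :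
    quarticCubic lam (6 + 3 * √3) = (27 * (26 + 15 * √3) / 2 - lam) * (10 + 6 * √3) := by
  have hs : √3 ^ 2 = 3 := sq_sqrt (by norm_num)
  unfold quarticCubic
  linear_combination (810 + 621 * √3 + 81 * √3 ^ 2 - 3 * lam - lam * √3) * hs

theorem quarticCubic_self_pos {lam : ℝ} (h : 3 < lam) : 0 < quarticCubic lam lam := by
  have hcube : (lam / 3 - 1) ^ 3 < (lam / 3) ^ 3 := by gcongr <;> linarith
  have hlam3 : 0 < lam ^ 3 := by positivity
  calc (0 : ℝ) < lam ^ 3 * (26 / 27 * lam - 1) := mul_pos hlam3 (by linarith)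
    _ = lam ^ 4 - lam ^ 3 - lam * (lam / 3) ^ 3 := by ring
    _ < quarticCubic lam lam := by
      unfold quarticCubic
      have : (1 - lam / 3) ^ 3 = -(lam / 3 - 1) ^ 3 := by ring
      nlinarith

/-- For `λ₂ = 27(26+15√3)/2` and every `λ > λ₂`, the polynomial
`f_λ l = l⁴ − l³ + λ(1−l/3)³` has at least two distinct positive real roots. -/
theorem stmt11 :
    ∀ lam : ℝ, lam > 27 * (26 + 15 * Real.sqrt 3) / 2 →
      ∃ l₁ l₂ : ℝ, 0 < l₁ ∧ 0 < l₂ ∧ l₁ ≠ l₂ ∧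
        l₁ ^ 4 - l₁ ^ 3 + lam * (1 - l₁ / 3) ^ 3 = 0 ∧
        l₂ ^ 4 - l₂ ^ 3 + lam * (1 - l₂ / 3) ^ 3 = 0 := by
  intro lam hlam
  have hs : 0 ≤ √3 := sqrt_nonneg 3
  have hL : quarticCubic lam (6 + 3 * √3) < 0 := by
    rw [quarticCubic_six_add_three_sqrt_three]
    exact mul_neg_of_neg_of_pos (by linarith) (by positivity)
  obtain ⟨l₁, l₂, hl₁, hl₂, hf₁, hf₂⟩ := exists_lt_lt_of_gt_of_lt_of_gt
    (a := 3) (b := 6 + 3 * √3) (c := lam) (by linarith) (by linarith)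
    (continuous_quarticCubic lam).continuousOn (by rw [quarticCubic_three]; norm_num) hL
    (quarticCubic_self_pos (by linarith))
  exact ⟨l₁, l₂, by linarith [hl₁.1], by linarith [hl₂.1], (hl₁.2.trans hl₂.1).ne, hf₁, hf₂⟩
end

section
/- Let λ₁ = 27(26−15√3)/2 and λ₂ = 27(26+15√3)/2. For λ ∈ (λ₁, λ₂), the polynomial f_λ(l) = l⁴ − l³ + λ(1−l/3)³ does not have two distinct positive real roots. -/
open Real Set

lemma stmt12_aux0 (a b X Y : ℝ) (ha : 0 < a) (hb : 0 < b) (hss : 54 ≤ X + Y)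
    (hX : 0 ≤ X) (hY : 0 ≤ Y) : 0 < a * X + b * Y := by
  nlinarith [mul_pos ha hb, mul_nonneg (mul_nonneg ha.le ha.le) hX,
    mul_nonneg (mul_nonneg hb.le hb.le) hY, mul_nonneg ha.le hX, mul_nonneg hb.le hY]

/-- Key positivity: for `λ₁ < lam < λ₂`, the polynomial is positive everywhere. -/
lemma stmt12_pos (lam l : ℝ)
    (hl : 27 * (26 - 15 * Real.sqrt 3) / 2 < lam)
    (hr : lam < 27 * (26 + 15 * Real.sqrt 3) / 2) :
    0 < l ^ 4 - l ^ 3 + lam * (1 - l / 3) ^ 3 := by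
  obtain ⟨s, hsdef⟩ : ∃ s : ℝ, s = Real.sqrt 3 := ⟨_, rfl⟩
  rw [← hsdef] at hl hr
  have hs : s ^ 2 = 3 := by rw [hsdef]; exact Real.sq_sqrt (by norm_num)
  have hs0 : 0 < s := by rw [hsdef]; exact Real.sqrt_pos.mpr (by norm_num)
  -- factorization identities
  have id1 : l ^ 4 - l ^ 3 + (27 * (26 - 15 * s) / 2) * (1 - l / 3) ^ 3
      = (l - 6 + 3 * s) ^ 2 * ((l - 1 + 3 * s / 4) ^ 2 + 5 / 16) := by
    linear_combination (-405/4 + (135/4) * s - (81/16) * s ^ 2 + (351/4) * l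
      - (135/8) * l * s - (297/16) * l ^ 2) * hs
  have id2 : l ^ 4 - l ^ 3 + (27 * (26 + 15 * s) / 2) * (1 - l / 3) ^ 3
      = (l - 6 - 3 * s) ^ 2 * ((l - 1 - 3 * s / 4) ^ 2 + 5 / 16) := by
    linear_combination (-405/4 - (135/4) * s - (81/16) * s ^ 2 + (351/4) * l
      + (135/8) * l * s - (297/16) * l ^ 2) * hs
  -- lower bounds for the two extreme polynomials
  have hP1 : 5 / 16 * (l - 6 + 3 * s) ^ 2
      ≤ l ^ 4 - l ^ 3 + (27 * (26 - 15 * s) / 2) * (1 - l / 3) ^ 3 := by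
    rw [id1]; nlinarith [sq_nonneg (l - 6 + 3 * s), sq_nonneg (l - 1 + 3 * s / 4)]
  have hP2 : 5 / 16 * (l - 6 - 3 * s) ^ 2
      ≤ l ^ 4 - l ^ 3 + (27 * (26 + 15 * s) / 2) * (1 - l / 3) ^ 3 := by
    rw [id2]; nlinarith [sq_nonneg (l - 6 - 3 * s), sq_nonneg (l - 1 - 3 * s / 4)]
  -- positive coefficients
  have ha : 0 < 27 * (26 + 15 * s) / 2 - lam := by linarith
  have hb : 0 < lam - 27 * (26 - 15 * s) / 2 := by linarith
  -- sum of the two squares is at least 54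
  have hss : 54 ≤ (l - 6 + 3 * s) ^ 2 + (l - 6 - 3 * s) ^ 2 := by
    nlinarith [sq_nonneg (l - 6)]
  -- positivity of the convex combination
  have hcomb : 0 < (27 * (26 + 15 * s) / 2 - lam) * (l - 6 + 3 * s) ^ 2
      + (lam - 27 * (26 - 15 * s) / 2) * (l - 6 - 3 * s) ^ 2 :=
    stmt12_aux0 _ _ _ _ ha hb hss (sq_nonneg _) (sq_nonneg _)
  -- the key linear identity in lam
  have hkey : (405 * s) * (l ^ 4 - l ^ 3 + lam * (1 - l / 3) ^ 3)
      = (27 * (26 + 15 * s) / 2 - lam)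
          * (l ^ 4 - l ^ 3 + (27 * (26 - 15 * s) / 2) * (1 - l / 3) ^ 3)
      + (lam - 27 * (26 - 15 * s) / 2)
          * (l ^ 4 - l ^ 3 + (27 * (26 + 15 * s) / 2) * (1 - l / 3) ^ 3) := by
    ring
  have h1 := mul_le_mul_of_nonneg_left hP1 ha.le
  have h2 := mul_le_mul_of_nonneg_left hP2 hb.le
  have hfin : 0 < (405 * s) * (l ^ 4 - l ^ 3 + lam * (1 - l / 3) ^ 3) := by
    rw [hkey]; nlinarith
  by_contra h
  push_neg at h
  have : (405 * s) * (l ^ 4 - l ^ 3 + lam * (1 - l / 3) ^ 3) ≤ 0 :=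
    mul_nonpos_of_nonneg_of_nonpos (by positivity) h
  linarith

/-- For `λ ∈ (λ₁, λ₂)` with `λ₁ = 27(26−15√3)/2`,
`λ₂ = 27(26+15√3)/2`, the polynomial `f_λ l = l⁴ − l³ + λ(1−l/3)³` does not
have two distinct positive real roots. -/
theorem stmt12 :
    ∀ lam ∈ Ioo (27 * (26 - 15 * Real.sqrt 3) / 2) (27 * (26 + 15 * Real.sqrt 3) / 2),
      ¬ ∃ l₁ l₂ : ℝ, 0 < l₁ ∧ 0 < l₂ ∧ l₁ ≠ l₂ ∧
        l₁ ^ 4 - l₁ ^ 3 + lam * (1 - l₁ / 3) ^ 3 = 0 ∧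
        l₂ ^ 4 - l₂ ^ 3 + lam * (1 - l₂ / 3) ^ 3 = 0 := by
  rintro lam ⟨hl, hr⟩ ⟨l₁, l₂, _, _, _, e1, _⟩
  exact absurd e1 (ne_of_gt (stmt12_pos lam l₁ hl hr))
end

section
/- For β>6, the equation 2q((β−q)/6)^{1/3} = 3β − q has at least two distinct roots q ∈ (0, β) if and only if β > (3/2)(26+15√3), except possibly at β = (3/2)(26+15√3) itself. -/
/-!
Substituting `u = ((β - q)/6)^{1/3}`, i.e. `q = β - 6u³`, turns the equation into
`β (u - 1) = 6u⁴ + 3u³`, and `q ∈ (0, β)` into `0 < 6u³ < β`. The identity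
`4(β (u - 1) - 6u⁴ - 3u³) = 4(β - β*)(u - 1) - (2u - 1 - √3)² (6u² + (9 + 6√3)u + 21 + 12√3)`
shows that a root with `u > 1` forces `β ≥ β*`, while for `β > β*` the quartic is negative at `u = 1`,
positive at `u = (1 + √3)/2` and equal to `-3β/2` at `u = (β/6)^{1/3}`, so it has a root on either side.
-/

open Real Set

/-- `β* = 3/2 (26 + 15√3)`, the minimum of `(6u⁴ + 3u³)/(u - 1)` over `u > 1`, attained at
`u = (1 + √3)/2`. -/
noncomputable def criticalBeta : ℝ := 3 / 2 * (26 + 15 * √3)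

lemma rpow_one_third_pow_three {x : ℝ} (hx : 0 ≤ x) : (x ^ ((1 : ℝ) / 3)) ^ 3 = x := by
  rw [← rpow_natCast, ← rpow_mul hx]; norm_num

lemma pow_three_rpow_one_third {x : ℝ} (hx : 0 ≤ x) : (x ^ 3) ^ ((1 : ℝ) / 3) = x := by
  rw [← rpow_natCast, ← rpow_mul hx]; norm_num

lemma one_lt_sqrt_three : 1 < √3 := by
  rw [lt_sqrt zero_le_one]; norm_num

def reducedQuartic (β u : ℝ) : ℝ := β * (u - 1) - 6 * u ^ 4 - 3 * u ^ 3

lemma four_mul_reducedQuartic (β u : ℝ) :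
    4 * reducedQuartic β u = 4 * (β - criticalBeta) * (u - 1)
      - (2 * u - 1 - √3) ^ 2 * (6 * u ^ 2 + (9 + 6 * √3) * u + (21 + 12 * √3)) := by
  have hs : √3 ^ 2 = 3 := sq_sqrt (by norm_num)
  unfold reducedQuartic criticalBeta
  linear_combination (-18 * u ^ 2 - (27 - 6 * √3) * u + 45 + 12 * √3) * hs

lemma criticalBeta_le_of_reducedQuartic_eq_zero {β u : ℝ} (hβ : 0 ≤ β) (hu : 0 < u)
    (h : reducedQuartic β u = 0) : criticalBeta ≤ β := by
  have hs := one_lt_sqrt_three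
  have hu1 : 1 < u := by
    by_contra! hu1
    have : β * (u - 1) ≤ 0 := mul_nonpos_of_nonneg_of_nonpos hβ (by linarith)
    unfold reducedQuartic at h
    nlinarith [pow_pos hu 3, pow_pos hu 4]
  have hQ : 0 < 6 * u ^ 2 + (9 + 6 * √3) * u + (21 + 12 * √3) := by positivity
  have := four_mul_reducedQuartic β u
  rw [h] at this
  nlinarith [mul_nonneg (sq_nonneg (2 * u - 1 - √3)) hQ.le]

lemma reducedQuartic_pos_of_criticalBeta_lt {β : ℝ} (h : criticalBeta < β) :
    0 < reducedQuartic β ((1 + √3) / 2) := by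
  have hs := one_lt_sqrt_three
  have := four_mul_reducedQuartic β ((1 + √3) / 2)
  nlinarith [mul_pos (sub_pos.2 h) (sub_pos.2 hs)]

lemma exists_two_reducedQuartic_roots {β : ℝ} (h : criticalBeta < β) :
    ∃ u₁ u₂, 0 < u₁ ∧ u₁ < u₂ ∧ 6 * u₂ ^ 3 < β ∧ reducedQuartic β u₁ = 0 ∧ reducedQuartic β u₂ = 0 := by
  have hs := one_lt_sqrt_three
  have hs3 : √3 ^ 2 = 3 := sq_sqrt (by norm_num)
  have hβ : criticalBeta > 0 := by unfold criticalBeta; positivity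
  have hcont : Continuous (reducedQuartic β) := by unfold reducedQuartic; fun_prop
  set c := (1 + √3) / 2 with hc
  set U := (β / 6) ^ ((1 : ℝ) / 3)
  have hU3 : U ^ 3 = β / 6 := rpow_one_third_pow_three (by linarith)
  have hc1 : 1 < c := by linarith
  have hc3 : c ^ 3 = (5 + 3 * √3) / 4 := by linear_combination ((√3 + 3) / 8) * hs3
  have hcU : c < U := by
    refine lt_of_pow_lt_pow_left₀ 3 (rpow_nonneg (by linarith) _) ?_
    rw [hU3, hc3]
    unfold criticalBeta at h
    linarith
  have hqc := reducedQuartic_pos_of_criticalBeta_lt h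
  have hq1 : reducedQuartic β 1 < 0 := by unfold reducedQuartic; norm_num
  have hqU : reducedQuartic β U < 0 := by
    have : reducedQuartic β U = -3 * β / 2 := by
      unfold reducedQuartic; linear_combination (-6 * U - 3) * hU3
    linarith
  obtain ⟨u₁, ⟨hu₁, hu₁c⟩, hr₁⟩ :=
    intermediate_value_Ioo hc1.le hcont.continuousOn (show (0 : ℝ) ∈ Ioo _ _ from ⟨hq1, hqc⟩)
  obtain ⟨u₂, ⟨hu₂c, hu₂U⟩, hr₂⟩ :=
    intermediate_value_Ioo' hcU.le hcont.continuousOn (show (0 : ℝ) ∈ Ioo _ _ from ⟨hqU, hqc⟩)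
  have : u₂ ^ 3 < U ^ 3 := pow_lt_pow_left₀ hu₂U (by linarith) three_ne_zero
  exact ⟨u₁, u₂, by linarith, by linarith, by linarith, hr₁, hr₂⟩

lemma equation_iff_reducedQuartic_eq_zero {β u : ℝ} (hu : 0 ≤ u) :
    2 * (β - 6 * u ^ 3) * ((β - (β - 6 * u ^ 3)) / 6) ^ ((1 : ℝ) / 3) = 3 * β - (β - 6 * u ^ 3) ↔
      reducedQuartic β u = 0 := by
  rw [show (β - (β - 6 * u ^ 3)) / 6 = u ^ 3 by ring, pow_three_rpow_one_third hu]
  unfold reducedQuartic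
  exact ⟨fun h ↦ by linear_combination h / 2, fun h ↦ by linear_combination 2 * h⟩

theorem stmt13_general (β : ℝ) (hne : β ≠ 3 / 2 * (26 + 15 * Real.sqrt 3)) :
    (∃ q₁ q₂ : ℝ, q₁ ∈ Ioo 0 β ∧ q₂ ∈ Ioo 0 β ∧ q₁ ≠ q₂ ∧
      2 * q₁ * ((β - q₁) / 6) ^ ((1:ℝ)/3) = 3 * β - q₁ ∧
      2 * q₂ * ((β - q₂) / 6) ^ ((1:ℝ)/3) = 3 * β - q₂) ↔
    β > 3 / 2 * (26 + 15 * Real.sqrt 3) := by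
  constructor
  · rintro ⟨q, -, ⟨hq0, hqβ⟩, -, -, hq, -⟩
    have hx : 0 < (β - q) / 6 := by linarith
    obtain ⟨u, hu, rfl⟩ : ∃ u > 0, q = β - 6 * u ^ 3 :=
      ⟨_, rpow_pos_of_pos hx _, by rw [rpow_one_third_pow_three hx.le]; ring⟩
    rw [equation_iff_reducedQuartic_eq_zero hu.le] at hq
    exact (criticalBeta_le_of_reducedQuartic_eq_zero (by linarith) hu hq).lt_of_ne' hne
  · intro h
    obtain ⟨u₁, u₂, hu₁, h12, hu₂, hr₁, hr₂⟩ := exists_two_reducedQuartic_roots h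
    have hcube : u₁ ^ 3 < u₂ ^ 3 := pow_lt_pow_left₀ h12 hu₁.le three_ne_zero
    have hpos : 0 < u₁ ^ 3 := by positivity
    refine ⟨β - 6 * u₁ ^ 3, β - 6 * u₂ ^ 3, ⟨by linarith, by linarith⟩, ⟨by linarith, by linarith⟩,
      by linarith, ?_, ?_⟩
    · exact (equation_iff_reducedQuartic_eq_zero hu₁.le).2 hr₁
    · exact (equation_iff_reducedQuartic_eq_zero (by linarith)).2 hr₂

/-- For `β > 6` (excluding `β = (3/2)(26+15√3)` itself), the
equation `2q((β−q)/6)^{1/3} = 3β − q` has at least two distinct roots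
`q ∈ (0,β)` if and only if `β > (3/2)(26+15√3)`. -/
theorem stmt13 (β : ℝ) (hβ : 6 < β) (hne : β ≠ 3 / 2 * (26 + 15 * Real.sqrt 3)) :
    (∃ q₁ q₂ : ℝ, q₁ ∈ Ioo 0 β ∧ q₂ ∈ Ioo 0 β ∧ q₁ ≠ q₂ ∧
      2 * q₁ * ((β - q₁) / 6) ^ ((1:ℝ)/3) = 3 * β - q₁ ∧
      2 * q₂ * ((β - q₂) / 6) ^ ((1:ℝ)/3) = 3 * β - q₂) ↔
    β > 3 / 2 * (26 + 15 * Real.sqrt 3) :=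
  stmt13_general β hne
end
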